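/- Let A₁, A₂, A₃ be dichotomic observables on ℂ^{d₁}, let B¹_y, B²_y, B³_y (y = 1,2,3) be dichotomic observables on ℂ^{d₂}, let ρ₁ be a state on ℂ^{d₁}⊗ℂ^{d₂}, and let η₁, η₂, η₃ ∈ (0,1] with ξ₁ = √(1−η₁²), ξ₂ = √(1−η₂²). Write M₁ = A₁+A₂−A₃, M₂ = A₁−A₂+A₃, M₃ = −A₁+A₂+A₃, and define ρ₂ = ((1+ξ₁)/2)ρ₁ + ((1−ξ₁)/6)Σ_y(1⊗B¹_y)ρ₁(1⊗B¹_y) and ρ₃ = ((1+ξ₂)/2)ρ₂ + ((1−ξ₂)/6)Σ_y(1⊗B²_y)ρ₂(1⊗B²_y). Suppose Re Tr[Σ_y M_y⊗(η₁B¹_y) ρ₁] = 6η₁ and Re Tr[Σ_y M_y⊗(η₂B²_y) ρ₂] = 3η₂(1+ξ₁). Then Re Tr[Σ_y M_y⊗(η₃B³_y) ρ₃] ≤ (3η₃/2)(1+√(1−η₁²))(1+√(1−η₂²)). -/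

import Mathlib

/-!
Write `P_y = M_y ⊗ 1`, `Q_y = 1 ⊗ B¹_y`, `C_y = 1 ⊗ B²_y`, `D_y = 1 ⊗ B³_y`. Since
`Σ_y (P_y - 2 Q_y)² + (Σ_x A_x ⊗ 1)² = 24 - 4 Σ_y P_y Q_y`, Bob¹'s maximal value forces
`P_y ρ₁ = 2 Q_y ρ₁` and `(Σ_x A_x ⊗ 1) ρ₁ = 0`. As `P_y + P_z = 2 A_x ⊗ 1` for `y ≠ z`, the `Q_y`
then anticommute on `ρ₁` and sum to zero there, so `Σ_w Q_w Q_z Q_w ρ₁ = 0`: the twirl part of a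
Lüders update is invisible to `G P_z` whenever `G` commutes with Alice, and Bob²'s value is
`η₂ (1 + ξ₁) Σ_y Re Tr (C_y Q_y ρ₁)`. Each `C_y Q_y` is unitary, so each term is at most `1` and
maximality forces `C_y ρ₁ = Q_y ρ₁`. Thus `C_y` acts like `Q_y` on `ρ₁`, the second update is
invisible as well, and Bob³'s value is `η₃ (1 + ξ₁)(1 + ξ₂)/2 · Σ_y Re Tr (D_y Q_y ρ₁)`, at most
`3 η₃ (1 + ξ₁)(1 + ξ₂)/2`.
-/

open Matrix Kronecker ComplexOrder

namespace Matrix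

variable {N : Type*} [Fintype N]

theorem PosSemidef.re_trace_conjTranspose_mul_self_mul_nonneg {ρ : Matrix N N ℂ}
    (hρ : ρ.PosSemidef) (K : Matrix N N ℂ) : 0 ≤ (Kᴴ * K * ρ).trace.re := by
  rw [mul_assoc, trace_mul_comm]
  exact (Complex.nonneg_iff.mp (hρ.mul_mul_conjTranspose_same K).trace_nonneg).1

variable [DecidableEq N]

theorem PosSemidef.mul_eq_zero_of_re_trace_conjTranspose_mul_self_mul_eq_zero
    {ρ K : Matrix N N ℂ} (hρ : ρ.PosSemidef) (h : (Kᴴ * K * ρ).trace.re = 0) : K * ρ = 0 := by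
  obtain ⟨B, rfl⟩ : ∃ B : Matrix N N ℂ, ρ = Bᴴ * B := by
    open scoped MatrixOrder in exact CStarAlgebra.nonneg_iff_eq_star_mul_self.mp hρ.nonneg
  have htr : (Kᴴ * K * (Bᴴ * B)).trace = ((K * Bᴴ)ᴴ * (K * Bᴴ)).trace := by
    rw [conjTranspose_mul, conjTranspose_conjTranspose, ← mul_assoc (Kᴴ * K) Bᴴ B, trace_mul_comm]
    simp only [mul_assoc]
  have him : (Kᴴ * K * (Bᴴ * B)).trace.im = 0 := by
    rw [htr]
    exact ((Complex.nonneg_iff.mp (posSemidef_conjTranspose_mul_self (K * Bᴴ)).trace_nonneg).2).symm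
  have hKB : K * Bᴴ = 0 := by
    rw [← trace_conjTranspose_mul_self_eq_zero_iff, ← htr]
    exact Complex.ext h him
  rw [← mul_assoc, hKB, zero_mul]

theorem re_trace_conjTranspose_one_sub_mul_one_sub_mul {ρ U : Matrix N N ℂ} (hρ : ρ.IsHermitian)
    (htr : ρ.trace = 1) (hU : U ∈ unitaryGroup N ℂ) :
    ((1 - U)ᴴ * (1 - U) * ρ).trace.re = 2 - 2 * (U * ρ).trace.re := by
  have hUU : Uᴴ * U = 1 := mem_unitaryGroup_iff'.mp hU
  have hadj : (Uᴴ * ρ).trace = star (U * ρ).trace := by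
    rw [← trace_conjTranspose, conjTranspose_mul, hρ.eq, trace_mul_comm]
  have : (1 - U)ᴴ * (1 - U) * ρ = 2 • ρ - U * ρ - Uᴴ * ρ := by
    rw [conjTranspose_sub, conjTranspose_one]
    calc _ = ρ - U * ρ - Uᴴ * ρ + Uᴴ * U * ρ := by noncomm_ring
      _ = _ := by rw [hUU, one_mul]; abel
  rw [this, trace_sub, trace_sub, trace_smul, hadj, htr]
  simp only [nsmul_eq_mul, Nat.cast_ofNat, mul_one, RCLike.star_def, Complex.sub_re,
    Complex.re_ofNat, Complex.conj_re]
  ring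

theorem PosSemidef.re_trace_mul_le_one {ρ U : Matrix N N ℂ} (hρ : ρ.PosSemidef)
    (htr : ρ.trace = 1) (hU : U ∈ unitaryGroup N ℂ) : (U * ρ).trace.re ≤ 1 := by
  have := hρ.re_trace_conjTranspose_mul_self_mul_nonneg (1 - U)
  rw [re_trace_conjTranspose_one_sub_mul_one_sub_mul hρ.isHermitian htr hU] at this
  linarith

theorem PosSemidef.mul_eq_self_of_re_trace_mul_eq_one {ρ U : Matrix N N ℂ} (hρ : ρ.PosSemidef)
    (htr : ρ.trace = 1) (hU : U ∈ unitaryGroup N ℂ) (h : (U * ρ).trace.re = 1) : U * ρ = ρ := by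
  have := hρ.mul_eq_zero_of_re_trace_conjTranspose_mul_self_mul_eq_zero (K := 1 - U)
    (by rw [re_trace_conjTranspose_one_sub_mul_one_sub_mul hρ.isHermitian htr hU, h]; ring)
  rwa [sub_mul, one_mul, sub_eq_zero, eq_comm] at this

theorem mem_unitaryGroup_of_isHermitian {X : Matrix N N ℂ} (hX : X.IsHermitian) (h : X * X = 1) :
    X ∈ unitaryGroup N ℂ := by
  rw [mem_unitaryGroup_iff', star_eq_conjTranspose, hX.eq, h]

section Kronecker

variable {m n α : Type*} [CommRing α]

theorem IsHermitian.kronecker [StarRing α] {A : Matrix m m α} {B : Matrix n n α}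
    (hA : A.IsHermitian) (hB : B.IsHermitian) : (A ⊗ₖ B).IsHermitian := by
  rw [IsHermitian, conjTranspose_kronecker, hA.eq, hB.eq]

variable [Fintype m] [Fintype n] [DecidableEq m] [DecidableEq n]

theorem commute_kronecker_one_one_kronecker (A : Matrix m m α) (B : Matrix n n α) :
    Commute (A ⊗ₖ (1 : Matrix n n α)) ((1 : Matrix m m α) ⊗ₖ B) := by
  simp only [Commute, SemiconjBy, ← mul_kronecker_mul, mul_one, one_mul]

theorem kronecker_one_mul_self {A : Matrix m m α} (h : A * A = 1) :
    A ⊗ₖ (1 : Matrix n n α) * A ⊗ₖ (1 : Matrix n n α) = 1 := by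
  rw [← mul_kronecker_mul, h, one_mul, one_kronecker_one]

theorem one_kronecker_mul_self {B : Matrix n n α} (h : B * B = 1) :
    (1 : Matrix m m α) ⊗ₖ B * (1 : Matrix m m α) ⊗ₖ B = 1 := by
  rw [← mul_kronecker_mul, h, one_mul, one_kronecker_one]

end Kronecker

end Matrix

namespace SeqBell

section Ring

variable {R : Type*} [Ring R]

def bellCombination (A : Fin 3 → R) : Fin 3 → R :=
  ![A 0 + A 1 - A 2, A 0 - A 1 + A 2, -A 0 + A 1 + A 2]

theorem map_bellCombination {S : Type*} [Ring S] (f : R →+ S) (A : Fin 3 → R) (y : Fin 3) :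
    f (bellCombination A y) = bellCombination (f ∘ A) y := by
  fin_cases y <;> simp [bellCombination]

theorem commute_bellCombination {A : Fin 3 → R} {b : R} (h : ∀ x, Commute (A x) b) (y : Fin 3) :
    Commute (bellCombination A y) b := by
  fin_cases y
  · exact ((h 0).add_left (h 1)).sub_left (h 2)
  · exact ((h 0).sub_left (h 1)).add_left (h 2)
  · exact ((h 0).neg_left.add_left (h 1)).add_left (h 2)

theorem sum_bellCombination (A : Fin 3 → R) : ∑ y, bellCombination A y = ∑ x, A x := by
  simp only [bellCombination, Fin.sum_univ_three, cons_val_zero, cons_val_one, cons_val]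
  abel

theorem exists_bellCombination_add_eq_two_mul (A : Fin 3 → R) {y z : Fin 3} (h : y ≠ z) :
    ∃ x, bellCombination A y + bellCombination A z = 2 * A x := by
  have h01 : bellCombination A 0 + bellCombination A 1 = 2 * A 0 := by
    simp only [bellCombination, cons_val_zero, cons_val_one]; noncomm_ring
  have h02 : bellCombination A 0 + bellCombination A 2 = 2 * A 1 := by
    simp only [bellCombination, cons_val_zero, cons_val]; noncomm_ring
  have h12 : bellCombination A 1 + bellCombination A 2 = 2 * A 2 := by
    simp only [bellCombination, cons_val_one, cons_val_zero, cons_val]; noncomm_ring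
  fin_cases y <;> fin_cases z
  all_goals first
    | exact absurd rfl h
    | exact ⟨_, h01⟩ | exact ⟨_, h02⟩ | exact ⟨_, h12⟩
    | exact ⟨_, (add_comm _ _).trans h01⟩ | exact ⟨_, (add_comm _ _).trans h02⟩
    | exact ⟨_, (add_comm _ _).trans h12⟩

theorem sum_bellCombination_mul_self_add_sum_mul_self (A : Fin 3 → R) :
    ∑ y, bellCombination A y * bellCombination A y + (∑ x, A x) * (∑ x, A x)
      = 4 * ∑ x, A x * A x := by
  simp only [bellCombination, Fin.sum_univ_three, cons_val_zero, cons_val_one, cons_val]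
  noncomm_ring

theorem sum_bellCombination_sub_two_mul_sq_add_sum_sq {T Q : Fin 3 → R}
    (hT : ∀ x, T x * T x = 1) (hQ : ∀ y, Q y * Q y = 1) (hTQ : ∀ x y, Commute (T x) (Q y)) :
    ∑ y, (bellCombination T y - 2 * Q y) * (bellCombination T y - 2 * Q y)
      + (∑ x, T x) * (∑ x, T x) + 4 * ∑ y, Q y * bellCombination T y = 24 := by
  have hsq (y : Fin 3) : (bellCombination T y - 2 * Q y) * (bellCombination T y - 2 * Q y)
      = bellCombination T y * bellCombination T y + 4 - 4 * (Q y * bellCombination T y) := by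
    have hc := (commute_bellCombination (fun x => hTQ x y) y).eq
    calc _ = bellCombination T y * bellCombination T y - 2 * (bellCombination T y * Q y)
          - 2 * (Q y * bellCombination T y) + 4 * (Q y * Q y) := by noncomm_ring
      _ = _ := by rw [hc, hQ, mul_one]; noncomm_ring
  have hsum : ∑ y, (bellCombination T y * bellCombination T y + 4
        - 4 * (Q y * bellCombination T y))
      = ∑ y, bellCombination T y * bellCombination T y + 12
        - 4 * ∑ y, Q y * bellCombination T y := by
    simp only [Finset.sum_sub_distrib, Finset.sum_add_distrib, Finset.mul_sum]
    norm_num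
  rw [Finset.sum_congr rfl fun y _ => hsq y, hsum]
  calc _ = (∑ y, bellCombination T y * bellCombination T y + (∑ x, T x) * (∑ x, T x)) + 12 := by
        abel
    _ = 24 := by
        rw [sum_bellCombination_mul_self_add_sum_mul_self, Finset.sum_congr rfl fun x _ => hT x]
        norm_num

theorem mul_add_mul_mul_eq_neg {T Q Q' ρ : R} (hT : T * T = 1) (hQ : Q * Q = 1)
    (hQ' : Q' * Q' = 1) (hc : Commute T (Q + Q')) (h : T * ρ = (Q + Q') * ρ) :
    (Q * Q' + Q' * Q) * ρ = -ρ := by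
  have hρ : ρ = (Q + Q') * (Q + Q') * ρ := calc
    ρ = T * (T * ρ) := by rw [← mul_assoc, hT, one_mul]
    _ = T * (Q + Q') * ρ := by rw [h, mul_assoc]
    _ = (Q + Q') * (T * ρ) := by rw [hc.eq, mul_assoc]
    _ = _ := by rw [h, mul_assoc]
  have hsq : (Q + Q') * (Q + Q') = 2 + (Q * Q' + Q' * Q) := calc
    _ = Q * Q + Q' * Q' + (Q * Q' + Q' * Q) := by noncomm_ring
    _ = _ := by rw [hQ, hQ', one_add_one_eq_two]
  rw [hsq, add_mul] at hρ
  rw [eq_sub_of_add_eq' hρ.symm]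
  noncomm_ring

theorem sum_mul_mul_mul_eq_zero_of_anticomm {Q : Fin 3 → R} {ρ : R} (hQ : ∀ y, Q y * Q y = 1)
    (hanti : ∀ y z, y ≠ z → (Q y * Q z + Q z * Q y) * ρ = -ρ) (hsum : (∑ y, Q y) * ρ = 0)
    (z : Fin 3) : ∑ w, Q w * Q z * Q w * ρ = 0 := by
  have hoff (w : Fin 3) (hw : w ≠ z) : Q w * Q z * Q w * ρ = -(Q w * ρ) - Q z * ρ := by
    have h := hanti z w hw.symm
    rw [add_mul, ← eq_sub_iff_add_eq] at h
    calc Q w * Q z * Q w * ρ = Q w * (Q z * Q w * ρ) := by simp only [mul_assoc]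
      _ = -(Q w * ρ) - Q w * Q w * (Q z * ρ) := by rw [h]; noncomm_ring
      _ = _ := by rw [hQ, one_mul]
  have hdiag : Q z * Q z * Q z * ρ = Q z * ρ := by rw [hQ, one_mul]
  rw [Fin.sum_univ_three, add_mul, add_mul] at hsum
  rw [Fin.sum_univ_three, ← neg_eq_zero, ← hsum]
  obtain rfl | rfl | rfl : z = 0 ∨ z = 1 ∨ z = 2 := by omega
  · rw [hdiag, hoff 1 (by decide), hoff 2 (by decide)]; noncomm_ring
  · rw [hdiag, hoff 0 (by decide), hoff 2 (by decide)]; noncomm_ring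
  · rw [hdiag, hoff 0 (by decide), hoff 1 (by decide)]; noncomm_ring

end Ring

section SelfTest

variable {N : Type*} [Fintype N] [DecidableEq N]

/-- The relations on the support of `ρ` certified by a maximal Alice–Bob¹ Bell value. -/
structure SelfTested (T Q : Fin 3 → Matrix N N ℂ) (ρ : Matrix N N ℂ) : Prop where
  bellCombination_mul : ∀ y, bellCombination T y * ρ = (2 : ℂ) • (Q y * ρ)
  mul_bellCombination : ∀ y, ρ * bellCombination T y = (2 : ℂ) • (ρ * Q y)
  anticomm : ∀ y z, y ≠ z → (Q y * Q z + Q z * Q y) * ρ = -ρ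
  sum_mul : (∑ y, Q y) * ρ = 0

theorem isHermitian_bellCombination {A : Fin 3 → Matrix N N ℂ} (hA : ∀ x, (A x).IsHermitian)
    (y : Fin 3) : (bellCombination A y).IsHermitian := by
  fin_cases y
  · exact ((hA 0).add (hA 1)).sub (hA 2)
  · exact ((hA 0).sub (hA 1)).add (hA 2)
  · exact ((hA 0).neg.add (hA 1)).add (hA 2)

theorem bellCombination_mul_eq_of_sum_re_trace_eq_six {T Q : Fin 3 → Matrix N N ℂ}
    {ρ : Matrix N N ℂ} (hT : ∀ x, (T x).IsHermitian) (hT2 : ∀ x, T x * T x = 1)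
    (hQ : ∀ y, (Q y).IsHermitian) (hQ2 : ∀ y, Q y * Q y = 1) (hTQ : ∀ x y, Commute (T x) (Q y))
    (hρ : ρ.PosSemidef) (htr : ρ.trace = 1)
    (hbell : ∑ y, (Q y * bellCombination T y * ρ).trace.re = 6) :
    (∀ y, bellCombination T y * ρ = (2 : ℂ) • (Q y * ρ)) ∧ (∑ x, T x) * ρ = 0 := by
  have hsos := sum_bellCombination_sub_two_mul_sq_add_sum_sq hT2 hQ2 hTQ
  set K : Fin 3 → Matrix N N ℂ := fun y => bellCombination T y - 2 * Q y
  set S := ∑ x, T x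
  have hK (y : Fin 3) : (K y)ᴴ = K y :=
    ((isHermitian_bellCombination hT y).sub (by rw [two_mul]; exact (hQ y).add (hQ y))).eq
  have hS : Sᴴ = S := isSelfAdjoint_sum _ fun x _ => hT x
  have hofNat (n : ℕ) [n.AtLeastTwo] (X : Matrix N N ℂ) :
      (OfNat.ofNat n : Matrix N N ℂ) * X = (OfNat.ofNat n : ℂ) • X := by
    rw [ofNat_smul_eq_nsmul (R := ℂ), nsmul_eq_mul, Nat.cast_ofNat]
  rw [← mul_one (24 : Matrix N N ℂ), hofNat, hofNat, ← eq_sub_iff_add_eq] at hsos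
  have hsum : ∑ y, ((K y)ᴴ * K y * ρ).trace.re + (Sᴴ * S * ρ).trace.re = 0 := by
    rw [hS, Finset.sum_congr rfl fun y _ => by rw [hK y], ← Complex.re_sum, ← trace_sum,
      ← Complex.add_re, ← trace_add, ← Finset.sum_mul, ← add_mul, hsos, sub_mul, smul_mul_assoc,
      smul_mul_assoc, one_mul, trace_sub, trace_smul, trace_smul, htr, Finset.sum_mul, trace_sum]
    simp only [smul_eq_mul, mul_one, Complex.sub_re, Complex.re_ofNat, Complex.mul_re,
      Complex.re_sum, hbell, Complex.im_ofNat, Complex.im_sum, zero_mul, sub_zero]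
    norm_num
  rw [add_eq_zero_iff_of_nonneg
      (Finset.sum_nonneg fun y _ => hρ.re_trace_conjTranspose_mul_self_mul_nonneg _)
      (hρ.re_trace_conjTranspose_mul_self_mul_nonneg _),
    Finset.sum_eq_zero_iff_of_nonneg fun y _ => hρ.re_trace_conjTranspose_mul_self_mul_nonneg _]
    at hsum
  refine ⟨fun y => ?_, hρ.mul_eq_zero_of_re_trace_conjTranspose_mul_self_mul_eq_zero hsum.2⟩
  have := hρ.mul_eq_zero_of_re_trace_conjTranspose_mul_self_mul_eq_zero
    (hsum.1 y (Finset.mem_univ y))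
  rw [two_smul]
  rwa [sub_mul, sub_eq_zero, mul_assoc, two_mul] at this

theorem SelfTested.of_bellCombination_mul {T Q : Fin 3 → Matrix N N ℂ} {ρ : Matrix N N ℂ}
    (hT : ∀ x, (T x).IsHermitian) (hT2 : ∀ x, T x * T x = 1) (hQ : ∀ y, (Q y).IsHermitian)
    (hQ2 : ∀ y, Q y * Q y = 1) (hTQ : ∀ x y, Commute (T x) (Q y)) (hρ : ρ.IsHermitian)
    (hMρ : ∀ y, bellCombination T y * ρ = (2 : ℂ) • (Q y * ρ)) (hSρ : (∑ x, T x) * ρ = 0) :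
    SelfTested T Q ρ := by
  refine ⟨hMρ, fun y => ?_, fun y z hyz => ?_, ?_⟩
  · simpa [conjTranspose_mul, hρ.eq, (hQ y).eq, (isHermitian_bellCombination hT y).eq]
      using congrArg conjTranspose (hMρ y)
  · obtain ⟨x, hx⟩ := exists_bellCombination_add_eq_two_mul T hyz
    refine mul_add_mul_mul_eq_neg (hT2 x) (hQ2 y) (hQ2 z) ((hTQ x y).add_right (hTQ x z))
      ((smul_right_inj (two_ne_zero : (2 : ℂ) ≠ 0)).mp ?_)
    rw [← smul_mul_assoc, two_smul, ← two_mul, ← hx, add_mul, hMρ, hMρ, ← smul_add, add_mul]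
  · refine (smul_right_inj (two_ne_zero : (2 : ℂ) ≠ 0)).mp ?_
    calc (2 : ℂ) • ((∑ y, Q y) * ρ) = ∑ y, bellCombination T y * ρ := by
          rw [Finset.sum_mul, Finset.smul_sum]
          exact Finset.sum_congr rfl fun y _ => (hMρ y).symm
      _ = (2 : ℂ) • 0 := by rw [← Finset.sum_mul, sum_bellCombination, hSρ, smul_zero]

theorem selfTested_of_sum_re_trace_eq_six {T Q : Fin 3 → Matrix N N ℂ} {ρ : Matrix N N ℂ}
    (hT : ∀ x, (T x).IsHermitian) (hT2 : ∀ x, T x * T x = 1) (hQ : ∀ y, (Q y).IsHermitian)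
    (hQ2 : ∀ y, Q y * Q y = 1) (hTQ : ∀ x y, Commute (T x) (Q y)) (hρ : ρ.PosSemidef)
    (htr : ρ.trace = 1) (hbell : ∑ y, (Q y * bellCombination T y * ρ).trace.re = 6) :
    SelfTested T Q ρ :=
  have h := bellCombination_mul_eq_of_sum_re_trace_eq_six hT hT2 hQ hQ2 hTQ hρ htr hbell
  .of_bellCombination_mul hT hT2 hQ hQ2 hTQ hρ.isHermitian h.1 h.2

/-- For `α = (1 + ξ)/2`, `β = (1 - ξ)/6` with `ξ = √(1 - η²)`, the average post-measurement
state of an unsharp (sharpness `η`) Lüders measurement of a uniformly random `Q y`. -/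
def ludersUpdate (α β : ℂ) (Q : Fin 3 → Matrix N N ℂ) (ρ : Matrix N N ℂ) : Matrix N N ℂ :=
  α • ρ + β • ∑ y, Q y * ρ * Q y

namespace SelfTested

variable {T Q : Fin 3 → Matrix N N ℂ} {ρ : Matrix N N ℂ}

theorem trace_mul_mul_eq (hst : SelfTested T Q ρ) {X : Matrix N N ℂ} (y : Fin 3)
    (hX : Commute X (bellCombination T y)) : (X * ρ * Q y).trace = (X * Q y * ρ).trace := by
  refine mul_left_cancel₀ (two_ne_zero : (2 : ℂ) ≠ 0) ?_
  calc 2 * (X * ρ * Q y).trace = (X * ρ * bellCombination T y).trace := by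
        rw [mul_assoc X ρ (bellCombination T y), hst.mul_bellCombination, mul_smul_comm,
          trace_smul, smul_eq_mul, ← mul_assoc]
    _ = (X * (bellCombination T y * ρ)).trace := by
        rw [trace_mul_cycle, ← hX.eq, mul_assoc]
    _ = 2 * (X * Q y * ρ).trace := by
        rw [hst.bellCombination_mul, mul_smul_comm, trace_smul, smul_eq_mul, mul_assoc]

theorem sum_trace_mul_mul_mul_mul_eq_zero (hst : SelfTested T Q ρ) (hQ2 : ∀ y, Q y * Q y = 1)
    (hTQ : ∀ x y, Commute (T x) (Q y)) {G : Matrix N N ℂ} (hG : ∀ x, Commute G (T x))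
    (z : Fin 3) : ∑ w, (G * Q w * Q z * ρ * Q w).trace = 0 := by
  have hQT (w y : Fin 3) : Commute (Q w) (bellCombination T y) :=
    (commute_bellCombination (fun x => hTQ x w) y).symm
  have hGT (y : Fin 3) : Commute G (bellCombination T y) :=
    (commute_bellCombination (fun x => (hG x).symm) y).symm
  calc ∑ w, (G * Q w * Q z * ρ * Q w).trace = ∑ w, (G * (Q w * Q z * Q w * ρ)).trace :=
        Finset.sum_congr rfl fun w _ => by
          rw [hst.trace_mul_mul_eq w (((hGT w).mul_left (hQT w w)).mul_left (hQT z w))]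
          simp only [mul_assoc]
    _ = 0 := by
        rw [← trace_sum, ← Finset.mul_sum,
          sum_mul_mul_mul_eq_zero_of_anticomm hQ2 hst.anticomm hst.sum_mul, mul_zero, trace_zero]

theorem trace_mul_bellCombination_mul_ludersUpdate (hst : SelfTested T Q ρ)
    (hQ2 : ∀ y, Q y * Q y = 1) (hTQ : ∀ x y, Commute (T x) (Q y)) {G : Matrix N N ℂ}
    (hG : ∀ x, Commute G (T x)) (α β : ℂ) (z : Fin 3) :
    (G * bellCombination T z * ludersUpdate α β Q ρ).trace = 2 * α * (G * Q z * ρ).trace := by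
  have hconj (w : Fin 3) : G * bellCombination T z * (Q w * ρ * Q w)
      = (2 : ℂ) • (G * Q w * Q z * ρ * Q w) := by
    have hc := (commute_bellCombination (fun x => hTQ x w) z).eq
    calc _ = G * (bellCombination T z * Q w) * ρ * Q w := by simp only [mul_assoc]
      _ = G * Q w * (bellCombination T z * ρ) * Q w := by rw [hc]; simp only [mul_assoc]
      _ = _ := by rw [hst.bellCombination_mul, mul_smul_comm, smul_mul_assoc]; simp only [mul_assoc]
  rw [ludersUpdate, mul_add, mul_smul_comm, mul_smul_comm, trace_add, trace_smul, trace_smul,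
    Finset.mul_sum, Finset.sum_congr rfl fun w _ => hconj w, ← Finset.smul_sum, trace_smul,
    trace_sum, hst.sum_trace_mul_mul_mul_mul_eq_zero hQ2 hTQ hG, mul_assoc, hst.bellCombination_mul,
    mul_smul_comm, trace_smul]
  simp only [smul_eq_mul, mul_zero, add_zero, ← mul_assoc]
  ring

theorem trace_mul_bellCombination_mul_ludersUpdate_ludersUpdate (hst : SelfTested T Q ρ)
    (hQ2 : ∀ y, Q y * Q y = 1) (hTQ : ∀ x y, Commute (T x) (Q y)) {C : Fin 3 → Matrix N N ℂ}
    (hTC : ∀ x y, Commute (T x) (C y)) (hCl : ∀ y, C y * ρ = Q y * ρ)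
    (hCr : ∀ y, ρ * C y = ρ * Q y) {G : Matrix N N ℂ} (hG : ∀ x, Commute G (T x))
    (α β α' β' : ℂ) (z : Fin 3) :
    (G * bellCombination T z * ludersUpdate α' β' C (ludersUpdate α β Q ρ)).trace
      = 2 * α' * α * (G * Q z * ρ).trace := by
  set σ := ludersUpdate α β Q ρ
  have hCM (w y : Fin 3) : Commute (C w) (bellCombination T y) :=
    (commute_bellCombination (fun x => hTC x w) y).symm
  have hCQ (w : Fin 3) : C w * Q z * ρ = Q w * Q z * ρ := by
    refine (smul_right_inj (two_ne_zero : (2 : ℂ) ≠ 0)).mp ?_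
    calc (2 : ℂ) • (C w * Q z * ρ) = C w * (bellCombination T z * ρ) := by
          rw [hst.bellCombination_mul, mul_smul_comm, mul_assoc]
      _ = bellCombination T z * (Q w * ρ) := by rw [← mul_assoc, (hCM w z).eq, mul_assoc, hCl]
      _ = Q w * (bellCombination T z * ρ) := by
          rw [← mul_assoc, (commute_bellCombination (fun x => hTQ x w) z).eq, mul_assoc]
      _ = (2 : ℂ) • (Q w * Q z * ρ) := by rw [hst.bellCombination_mul, mul_smul_comm, mul_assoc]
  have hterm (w : Fin 3) : (G * bellCombination T z * (C w * σ * C w)).trace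
      = 2 * α * (G * Q w * Q z * ρ * Q w).trace := calc
    _ = (C w * (G * bellCombination T z * C w * σ)).trace := by
        rw [trace_mul_comm (C w)]; simp only [mul_assoc]
    _ = (C w * G * C w * bellCombination T z * σ).trace := by
        rw [mul_assoc G, ← (hCM w z).eq]; simp only [mul_assoc]
    _ = 2 * α * (C w * (G * C w * Q z * ρ)).trace := by
        rw [hst.trace_mul_bellCombination_mul_ludersUpdate hQ2 hTQ
          (fun x => (((hTC x w).symm.mul_left (hG x)).mul_left (hTC x w).symm)) α β z]
        simp only [mul_assoc]
    _ = 2 * α * (G * (C w * Q z * ρ) * C w).trace := by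
        rw [trace_mul_comm]; simp only [mul_assoc]
    _ = 2 * α * (G * Q w * Q z * ρ * Q w).trace := by
        rw [hCQ]; simp only [mul_assoc]; rw [hCr]
  rw [ludersUpdate, mul_add, mul_smul_comm, mul_smul_comm, trace_add, trace_smul, trace_smul,
    Finset.mul_sum, trace_sum, Finset.sum_congr rfl fun w _ => hterm w, ← Finset.mul_sum,
    hst.sum_trace_mul_mul_mul_mul_eq_zero hQ2 hTQ hG,
    hst.trace_mul_bellCombination_mul_ludersUpdate hQ2 hTQ hG]
  simp only [smul_eq_mul]
  ring

theorem mul_eq_of_sum_re_trace_ludersUpdate_eq (hst : SelfTested T Q ρ)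
    (hQ : ∀ y, (Q y).IsHermitian) (hQ2 : ∀ y, Q y * Q y = 1) (hTQ : ∀ x y, Commute (T x) (Q y))
    {C : Fin 3 → Matrix N N ℂ}
    (hC : ∀ y, (C y).IsHermitian) (hC2 : ∀ y, C y * C y = 1) (hTC : ∀ x y, Commute (T x) (C y))
    (hρ : ρ.PosSemidef) (htr : ρ.trace = 1) {α : ℝ} (hα : 0 < α) (β : ℂ)
    (h : ∑ y, (C y * bellCombination T y * ludersUpdate α β Q ρ).trace.re = 6 * α) (y : Fin 3) :
    C y * ρ = Q y * ρ := by
  have hU (y : Fin 3) : C y * Q y ∈ unitaryGroup N ℂ :=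
    mul_mem (mem_unitaryGroup_of_isHermitian (hC y) (hC2 y))
      (mem_unitaryGroup_of_isHermitian (hQ y) (hQ2 y))
  have hle (y : Fin 3) : (C y * Q y * ρ).trace.re ≤ 1 := hρ.re_trace_mul_le_one htr (hU y)
  have hsum : ∑ y, (C y * Q y * ρ).trace.re = 3 := by
    have hre (t : ℂ) : (2 * (α : ℂ) * t).re = 2 * α * t.re := by simp
    simp only [hst.trace_mul_bellCombination_mul_ludersUpdate hQ2 hTQ (fun x => (hTC x _).symm),
      hre, ← Finset.mul_sum] at h
    exact mul_left_cancel₀ (by positivity) (h.trans (by ring))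
  have heq : (C y * Q y * ρ).trace.re = 1 := by
    rw [Fin.sum_univ_three] at hsum
    obtain rfl | rfl | rfl : y = 0 ∨ y = 1 ∨ y = 2 := by omega
    all_goals linarith [hle 0, hle 1, hle 2]
  calc C y * ρ = C y * (C y * Q y * ρ) := by
        rw [hρ.mul_eq_self_of_re_trace_mul_eq_one htr (hU y) heq]
    _ = Q y * ρ := by rw [← mul_assoc, ← mul_assoc, hC2, one_mul]

theorem sum_re_trace_ludersUpdate_ludersUpdate_le (hst : SelfTested T Q ρ)
    (hQ : ∀ y, (Q y).IsHermitian) (hQ2 : ∀ y, Q y * Q y = 1) (hTQ : ∀ x y, Commute (T x) (Q y))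
    {C : Fin 3 → Matrix N N ℂ}
    (hC : ∀ y, (C y).IsHermitian) (hTC : ∀ x y, Commute (T x) (C y))
    (hCρ : ∀ y, C y * ρ = Q y * ρ) {D : Fin 3 → Matrix N N ℂ} (hD : ∀ y, (D y).IsHermitian)
    (hD2 : ∀ y, D y * D y = 1) (hTD : ∀ x y, Commute (T x) (D y)) (hρ : ρ.PosSemidef)
    (htr : ρ.trace = 1) {α α' : ℝ} (hα : 0 ≤ α) (hα' : 0 ≤ α') (β β' : ℂ) :
    ∑ y, (D y * bellCombination T y * ludersUpdate α' β' C (ludersUpdate α β Q ρ)).trace.re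
      ≤ 6 * α' * α := by
  have hρC (y : Fin 3) : ρ * C y = ρ * Q y := by
    simpa [conjTranspose_mul, hρ.isHermitian.eq, (hC y).eq, (hQ y).eq]
      using congrArg conjTranspose (hCρ y)
  have hre (t : ℂ) : (2 * (α' : ℂ) * α * t).re = 2 * α' * α * t.re := by simp
  calc _ = ∑ y, 2 * α' * α * (D y * Q y * ρ).trace.re := by
        simp only [hst.trace_mul_bellCombination_mul_ludersUpdate_ludersUpdate hQ2 hTQ hTC hCρ hρC
          (fun x => (hTD x _).symm), hre]
    _ ≤ ∑ y : Fin 3, 2 * α' * α := Finset.sum_le_sum fun y _ =>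
        mul_le_of_le_one_right (by positivity) (hρ.re_trace_mul_le_one htr
          (mul_mem (mem_unitaryGroup_of_isHermitian (hD y) (hD2 y))
            (mem_unitaryGroup_of_isHermitian (hQ y) (hQ2 y))))
    _ = 6 * α' * α := by
        simp only [Finset.sum_const, Finset.card_univ, Fintype.card_fin, nsmul_eq_mul]
        ring

end SelfTested

end SelfTest

section Kronecker

variable {m n : Type*} [Fintype m] [Fintype n] [DecidableEq m] [DecidableEq n]

theorem bellCombination_kronecker {α : Type*} [CommRing α] (A : Fin 3 → Matrix m m α)
    (B : Matrix n n α) (y : Fin 3) :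
    bellCombination A y ⊗ₖ B
      = ((1 : Matrix m m α) ⊗ₖ B) * bellCombination (fun x => A x ⊗ₖ (1 : Matrix n n α)) y := by
  have := map_bellCombination
    (AddMonoidHom.mk' (· ⊗ₖ (1 : Matrix n n α)) fun X Y => add_kronecker X Y 1) A y
  simp only [AddMonoidHom.mk'_apply] at this
  rw [show (fun x => A x ⊗ₖ (1 : Matrix n n α)) = (· ⊗ₖ (1 : Matrix n n α)) ∘ A from rfl, ← this,
    ← mul_kronecker_mul, one_mul, mul_one]

theorem re_trace_sum_bellCombination_kronecker_smul_mul (A : Fin 3 → Matrix m m ℂ)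
    (B : Fin 3 → Matrix n n ℂ) (η : ℝ) (σ : Matrix (m × n) (m × n) ℂ) :
    ((∑ y, bellCombination A y ⊗ₖ ((η : ℂ) • B y)) * σ).trace.re
      = η * ∑ y, ((1 ⊗ₖ B y) * bellCombination (fun x => A x ⊗ₖ (1 : Matrix n n ℂ)) y
          * σ).trace.re := by
  simp only [kronecker_smul, bellCombination_kronecker, Finset.sum_mul, smul_mul_assoc, trace_sum,
    trace_smul, Complex.re_sum, smul_eq_mul, Complex.re_ofReal_mul, Finset.mul_sum]

end Kronecker

end SeqBell

open SeqBell

/-- Theorem 2: if the Alice–Bob¹ and Alice–Bob² sequential Bell values attain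
their maxima `6η₁` and `3η₂(1+ξ₁)`, then the Alice–Bob³ Bell value on the
twice-updated state `ρ₃` is at most `(3η₃/2)(1+√(1−η₁²))(1+√(1−η₂²))`.
Here `B1 y`, `B2 y`, `B3 y` are Bob¹'s, Bob²'s, Bob³'s observables. -/
theorem seq_bell_bound_bob3 {d₁ d₂ : ℕ}
    (A : Fin 3 → Matrix (Fin d₁) (Fin d₁) ℂ)
    (B1 B2 B3 : Fin 3 → Matrix (Fin d₂) (Fin d₂) ℂ)
    (hA : ∀ x, (A x).IsHermitian) (hAsq : ∀ x, A x * A x = 1)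
    (hB1 : ∀ y, (B1 y).IsHermitian) (hB1sq : ∀ y, B1 y * B1 y = 1)
    (hB2 : ∀ y, (B2 y).IsHermitian) (hB2sq : ∀ y, B2 y * B2 y = 1)
    (hB3 : ∀ y, (B3 y).IsHermitian) (hB3sq : ∀ y, B3 y * B3 y = 1)
    (ρ₁ : Matrix (Fin d₁ × Fin d₂) (Fin d₁ × Fin d₂) ℂ)
    (hρ₁ : ρ₁.PosSemidef) (hρ₁tr : ρ₁.trace = 1)
    (η₁ η₂ η₃ : ℝ) (hη₁ : η₁ ∈ Set.Ioc (0 : ℝ) 1) (hη₂ : η₂ ∈ Set.Ioc (0 : ℝ) 1)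
    (hη₃ : η₃ ∈ Set.Ioc (0 : ℝ) 1) :
    let ξ₁ : ℝ := Real.sqrt (1 - η₁ ^ 2)
    let ξ₂ : ℝ := Real.sqrt (1 - η₂ ^ 2)
    let M : Fin 3 → Matrix (Fin d₁) (Fin d₁) ℂ :=
      ![A 0 + A 1 - A 2, A 0 - A 1 + A 2, -A 0 + A 1 + A 2]
    let ρ₂ : Matrix (Fin d₁ × Fin d₂) (Fin d₁ × Fin d₂) ℂ :=
      (((1 + ξ₁) / 2 : ℝ) : ℂ) • ρ₁ + (((1 - ξ₁) / 6 : ℝ) : ℂ) •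
        ∑ y : Fin 3, ((1 : Matrix (Fin d₁) (Fin d₁) ℂ) ⊗ₖ B1 y) * ρ₁ *
          ((1 : Matrix (Fin d₁) (Fin d₁) ℂ) ⊗ₖ B1 y)
    let ρ₃ : Matrix (Fin d₁ × Fin d₂) (Fin d₁ × Fin d₂) ℂ :=
      (((1 + ξ₂) / 2 : ℝ) : ℂ) • ρ₂ + (((1 - ξ₂) / 6 : ℝ) : ℂ) •
        ∑ y : Fin 3, ((1 : Matrix (Fin d₁) (Fin d₁) ℂ) ⊗ₖ B2 y) * ρ₂ *
          ((1 : Matrix (Fin d₁) (Fin d₁) ℂ) ⊗ₖ B2 y)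
    (((∑ y : Fin 3, M y ⊗ₖ ((η₁ : ℂ) • B1 y)) * ρ₁).trace).re = 6 * η₁ →
    (((∑ y : Fin 3, M y ⊗ₖ ((η₂ : ℂ) • B2 y)) * ρ₂).trace).re = 3 * η₂ * (1 + ξ₁) →
    (((∑ y : Fin 3, M y ⊗ₖ ((η₃ : ℂ) • B3 y)) * ρ₃).trace).re
      ≤ 3 * η₃ / 2 * (1 + Real.sqrt (1 - η₁ ^ 2)) * (1 + Real.sqrt (1 - η₂ ^ 2)) := by
  intro ξ₁ ξ₂ M ρ₂ ρ₃ h1 h2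
  rw [show M = bellCombination A from rfl, re_trace_sum_bellCombination_kronecker_smul_mul]
    at h1 h2 ⊢
  set T : Fin 3 → Matrix (Fin d₁ × Fin d₂) (Fin d₁ × Fin d₂) ℂ := fun x => A x ⊗ₖ 1
  have hT : ∀ x, (T x).IsHermitian := fun x => (hA x).kronecker isHermitian_one
  have hT2 : ∀ x, T x * T x = 1 := fun x => kronecker_one_mul_self (hAsq x)
  have hTB (B : Fin 3 → Matrix (Fin d₂) (Fin d₂) ℂ) (x y : Fin 3) :
      Commute (T x) ((1 : Matrix (Fin d₁) (Fin d₁) ℂ) ⊗ₖ B y) :=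
    commute_kronecker_one_one_kronecker _ _
  have hBherm {B : Fin 3 → Matrix (Fin d₂) (Fin d₂) ℂ} (hB : ∀ y, (B y).IsHermitian)
      (y : Fin 3) : ((1 : Matrix (Fin d₁) (Fin d₁) ℂ) ⊗ₖ B y).IsHermitian :=
    isHermitian_one.kronecker (hB y)
  have hBsq {B : Fin 3 → Matrix (Fin d₂) (Fin d₂) ℂ} (hB : ∀ y, B y * B y = 1) (y : Fin 3) :
      (1 : Matrix (Fin d₁) (Fin d₁) ℂ) ⊗ₖ B y * (1 : Matrix (Fin d₁) (Fin d₁) ℂ) ⊗ₖ B y = 1 :=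
    one_kronecker_mul_self (hB y)
  have hξ₁ : 0 ≤ ξ₁ := Real.sqrt_nonneg _
  have hξ₂ : 0 ≤ ξ₂ := Real.sqrt_nonneg _
  have hst : SelfTested T (fun y => 1 ⊗ₖ B1 y) ρ₁ :=
    selfTested_of_sum_re_trace_eq_six hT hT2 (hBherm hB1) (hBsq hB1sq) (hTB B1) hρ₁ hρ₁tr
      (mul_left_cancel₀ hη₁.1.ne' (h1.trans (mul_comm _ _)))
  have hCρ := hst.mul_eq_of_sum_re_trace_ludersUpdate_eq (hBherm hB1) (hBsq hB1sq) (hTB B1)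
    (hBherm hB2) (hBsq hB2sq) (hTB B2) hρ₁ hρ₁tr (α := (1 + ξ₁) / 2) (by positivity) _
    (mul_left_cancel₀ hη₂.1.ne' (h2.trans (by ring)))
  calc _ ≤ η₃ * (6 * ((1 + ξ₂) / 2) * ((1 + ξ₁) / 2)) :=
        mul_le_mul_of_nonneg_left (hst.sum_re_trace_ludersUpdate_ludersUpdate_le (hBherm hB1)
          (hBsq hB1sq) (hTB B1) (hBherm hB2) (hTB B2) hCρ (hBherm hB3) (hBsq hB3sq) (hTB B3) hρ₁
          hρ₁tr (by positivity) (by positivity) _ _) hη₃.1.le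
    _ = _ := by ring
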